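/- arXiv:math/0408359 — 2 statements merged into one kernel-verified Lean document; each statement's English description precedes it below -/
import Mathlib

section
/- Let p be an odd prime. For a, b ∈ Z/pZ with a·b·(a+2b) ≢ 0 mod p set λ_{a,b}(p) = -p^{-1/2} Σ_{x mod p}((x(x-a)(x+2b))/p), and set λ_{a,b}(p²) = λ_{a,b}(p)² - 1 in that case; if a·b·(a+2b) ≡ 0 mod p (but not both a ≡ 0 and b ≡ 0) set λ_{a,b}(p²) = λ_{a,b}(p)², and set λ_{0,0}(p²) = 0. Then Σ_{a mod p} Σ_{b mod p} λ_{a,b}(p²) = 0, where one also uses that for a·b·(a+2b) ≡ 0 mod p with (a,b) ≠ (0,0), p·λ_{a,b}(p)² = 1. -/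
/-!
Write `χ` for the quadratic character of `𝔽_p` and `S(a,b) = ∑ₓ χ(x(x-a)(x+2b))`. Since
`S(0,0) = ∑ₓ χ(x)³ = ∑ₓ χ(x) = 0`, the summand is `S(a,b)²/p` minus the indicator of
`ab(a+2b) ≠ 0`. Expanding the square and summing over `a` and `b` first gives
`∑_{a,b} S(a,b)² = ∑_{x,y} χ(x)χ(y) K(y-x)²` with `K(d) = ∑ᵤ χ(u)χ(u+d)`, and
`K(d) = -1` for `d ≠ 0` (a Jacobi sum), `K(0) = p-1`. Hence `∑_{a,b} S(a,b)² = p(p-1)(p-2)`, while exactly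
`(p-1)(p-2)` pairs satisfy `ab(a+2b) ≠ 0`.
-/

open Finset MulChar

namespace MulChar.IsQuadratic

variable {F R : Type*} [Field F] [CommRing R] {χ : MulChar F R}

theorem mul_self_apply (hχ : χ.IsQuadratic) {u : F} (hu : u ≠ 0) : χ u * χ u = 1 := by
  rw [← sq, ← pow_apply' χ two_ne_zero, hχ.sq_eq_one, one_apply hu.isUnit]

theorem sum_mul_self [Fintype F] [DecidableEq F] (hχ : χ.IsQuadratic) :
    ∑ u, χ u * χ u = Fintype.card F - 1 := by
  simp_rw [← sq, ← pow_apply' χ two_ne_zero, hχ.sq_eq_one, sum_one_eq_card_units,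
    Fintype.card_eq_card_units_add_one (α := F)]
  push_cast
  ring

variable [Fintype F] [IsDomain R]

theorem sum_mul_add_of_ne_zero (hχ : χ.IsQuadratic) (hχ1 : χ ≠ 1) {d : F} (hd : d ≠ 0) :
    ∑ u, χ u * χ (u + d) = -1 := by
  have hJ := jacobiSum_nontrivial_inv hχ1
  rw [hχ.inv, jacobiSum] at hJ
  calc ∑ u, χ u * χ (u + d) = ∑ x, χ (-d * x) * χ (-d * x + d) :=
        (Equiv.sum_comp (Equiv.mulLeft₀ (-d) (neg_ne_zero.2 hd)) _).symm
    _ = ∑ x, χ (-1) * (χ d * χ d) * (χ x * χ (1 - x)) := by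
        refine sum_congr rfl fun x _ => ?_
        rw [show -d * x + d = d * (1 - x) by ring, show -d * x = -1 * d * x by ring]
        simp only [map_mul]
        ring
    _ = -1 := by
        rw [← mul_sum, hJ, hχ.mul_self_apply hd, mul_one, mul_neg,
          hχ.mul_self_apply (neg_ne_zero.2 one_ne_zero)]

theorem sum_mul_add [DecidableEq F] (hχ : χ.IsQuadratic) (hχ1 : χ ≠ 1) (d : F) :
    ∑ u, χ u * χ (u + d) = if d = 0 then (Fintype.card F : R) - 1 else -1 := by
  split_ifs with hd
  · simp only [hd, add_zero, hχ.sum_mul_self]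
  · exact hχ.sum_mul_add_of_ne_zero hχ1 hd

end MulChar.IsQuadratic

section

variable {F R : Type*} [Field F] [Fintype F] [CommRing R]

/-- For `χ` the quadratic character this is `-a_p` of the curve `y² = x(x-a)(x+cb)`. -/
def cubicCharSum (χ : MulChar F R) (c a b : F) : R :=
  ∑ x, χ (x * (x - a) * (x + c * b))

variable [IsDomain R] {χ : MulChar F R}

theorem cubicCharSum_zero_zero (hχ : χ.IsQuadratic) (hχ1 : χ ≠ 1) (c : F) :
    cubicCharSum χ c 0 0 = 0 := by
  have hcube (x : F) : χ (x * (x - 0) * (x + c * 0)) = (χ ^ 3) x := by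
    rw [pow_apply' χ three_ne_zero]
    simp only [sub_zero, mul_zero, add_zero, map_mul]
    ring
  simp only [cubicCharSum, hcube, hχ.pow_odd (by decide : Odd 3), sum_eq_zero_of_ne_one hχ1]

theorem sum_sum_cubicCharSum_sq (hχ : χ.IsQuadratic) (hχ1 : χ ≠ 1) {c : F} (hc : c ≠ 0) :
    ∑ a, ∑ b, cubicCharSum χ c a b ^ 2 =
      (Fintype.card F : R) * (Fintype.card F - 1) * (Fintype.card F - 2) := by
  classical
  set K : F → R := fun d => ∑ u, χ u * χ (u + d)
  have hA (x y : F) : ∑ a, χ (x - a) * χ (y - a) = K (y - x) := by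
    simp only [K]
    rw [← (Equiv.subLeft x).sum_comp (fun u => χ u * χ (u + (y - x)))]
    simp only [Equiv.subLeft_apply, sub_add_sub_cancel']
  have hB (x y : F) : ∑ b, χ (x + c * b) * χ (y + c * b) = K (y - x) := by
    simp only [K]
    rw [← ((Equiv.mulLeft₀ c hc).trans (Equiv.addLeft x)).sum_comp
      (fun u => χ u * χ (u + (y - x)))]
    simp only [Equiv.trans_apply, Equiv.mulLeft₀_apply, Equiv.coe_addLeft]
    exact sum_congr rfl fun b _ => by rw [add_right_comm, add_sub_cancel]
  have hK (x y : F) : χ x * χ y * (K (y - x) * K (y - x)) =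
      χ x * χ y + if x = y then (((Fintype.card F : R) - 1) ^ 2 - 1) * (χ x * χ x) else 0 := by
    by_cases h : x = y
    · subst h
      simp only [K, sub_self, hχ.sum_mul_add hχ1, if_true]
      ring
    · simp only [K, hχ.sum_mul_add hχ1, sub_eq_zero, Ne.symm h, h, if_false]
      ring
  calc ∑ a, ∑ b, cubicCharSum χ c a b ^ 2
      = ∑ a, ∑ b, ∑ x, ∑ y,
          χ x * χ y * (χ (x - a) * χ (y - a) * (χ (x + c * b) * χ (y + c * b))) := by
        refine sum_congr rfl fun a _ => sum_congr rfl fun b _ => ?_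
        rw [cubicCharSum, sq, sum_mul_sum]
        refine sum_congr rfl fun x _ => sum_congr rfl fun y _ => ?_
        simp only [map_mul]
        ring
    _ = ∑ x, ∑ y,
          χ x * χ y * ((∑ a, χ (x - a) * χ (y - a)) * ∑ b, χ (x + c * b) * χ (y + c * b)) := by
        simp_rw [sum_mul_sum, mul_sum]
        exact (sum_congr rfl fun a _ => sum_comm).trans <|
          sum_comm.trans <| sum_congr rfl fun x _ => sum_comm_cycle
    _ = ∑ x, ∑ y, (χ x * χ y +
          if x = y then (((Fintype.card F : R) - 1) ^ 2 - 1) * (χ x * χ x) else 0) := by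
        simp only [hA, hB, hK]
    _ = (∑ x, χ x) * (∑ y, χ y) +
          (((Fintype.card F : R) - 1) ^ 2 - 1) * ∑ x, χ x * χ x := by
        rw [sum_mul_sum, mul_sum]
        simp only [sum_add_distrib, sum_ite_eq, mem_univ, if_true]
    _ = (Fintype.card F : R) * (Fintype.card F - 1) * (Fintype.card F - 2) := by
        rw [sum_eq_zero_of_ne_one hχ1, hχ.sum_mul_self]
        ring

end

section

variable {F : Type*} [Field F] [Fintype F] [DecidableEq F]

theorem card_filter_mul_mul_add_ne_zero {a c : F} (ha : a ≠ 0) (hc : c ≠ 0) :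
    #{b | a * b * (a + c * b) ≠ 0} = Fintype.card F - 2 := by
  have hroots : ({b | a * b * (a + c * b) ≠ 0} : Finset F) = {0, -(a / c)}ᶜ := by
    ext b
    simp only [mem_filter, mem_univ, true_and, mem_compl, mem_insert, mem_singleton, ne_eq,
      mul_eq_zero, ha, false_or, not_or]
    rw [eq_neg_iff_add_eq_zero, add_comm b, div_add' _ _ _ hc, div_eq_zero_iff, mul_comm b c]
    simp [hc]
  rw [hroots, card_compl, card_pair (by simp [ha, hc] : (0 : F) ≠ -(a / c))]

theorem sum_card_filter_mul_mul_add_ne_zero {c : F} (hc : c ≠ 0) :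
    ∑ a, #{b | a * b * (a + c * b) ≠ 0} = (Fintype.card F - 1) * (Fintype.card F - 2) := by
  rw [← sum_erase_add _ _ (mem_univ 0),
    sum_congr rfl fun a ha => card_filter_mul_mul_add_ne_zero (ne_of_mem_erase ha) hc]
  simp [card_erase_of_mem]

end

/-- For an odd prime `p`, define `λ_{a,b}(p²)` by: `0` if `(a,b) = (0,0)`;
`λ_{a,b}(p)² = S(a,b)²/p` if `a·b·(a+2b) ≡ 0 (mod p)` but `(a,b) ≠ (0,0)`
(multiplicative reduction); and `λ_{a,b}(p)² - 1 = S(a,b)²/p - 1` if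
`a·b·(a+2b) ≢ 0 (mod p)` (good reduction), where
`S(a,b) = Σ_{x mod p} ((x(x-a)(x+2b))/p)` and `λ_{a,b}(p) = -p^{-1/2} S(a,b)`.
Then `Σ_{a,b mod p} λ_{a,b}(p²) = 0`. -/
theorem stmt_3 (p : ℕ) [Fact p.Prime] (hp : p ≠ 2) :
    ∑ a : ZMod p, ∑ b : ZMod p,
      (if a = 0 ∧ b = 0 then (0 : ℝ)
       else if a * b * (a + 2*b) = 0 then
         (∑ x : ZMod p, (legendreSym p ((x * (x - a) * (x + 2*b)).val) : ℝ))^2 / p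
       else
         (∑ x : ZMod p, (legendreSym p ((x * (x - a) * (x + 2*b)).val) : ℝ))^2 / p - 1)
      = 0 := by
  have hF : ringChar (ZMod p) ≠ 2 := by rwa [ZMod.ringChar_zmod_n]
  have hχ := quadraticChar_isQuadratic (ZMod p)
  have hχ1 := quadraticChar_ne_one hF
  have h2 : (2 : ZMod p) ≠ 0 := Ring.two_ne_zero hF
  set S := cubicCharSum (quadraticChar (ZMod p)) 2
  have hleg (a b : ZMod p) :
      ∑ x : ZMod p, (legendreSym p ((x * (x - a) * (x + 2 * b)).val) : ℝ) = S a b := by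
    simp [S, cubicCharSum, legendreSym]
  have hsummand (a b : ZMod p) :
      (if a = 0 ∧ b = 0 then (0 : ℝ)
       else if a * b * (a + 2 * b) = 0 then (S a b : ℝ) ^ 2 / p else (S a b : ℝ) ^ 2 / p - 1) =
      (S a b : ℝ) ^ 2 / p - ((if a * b * (a + 2 * b) ≠ 0 then 1 else 0 : ℕ) : ℝ) := by
    by_cases h₀ : a = 0 ∧ b = 0
    · obtain ⟨rfl, rfl⟩ := h₀
      simp [S, cubicCharSum_zero_zero hχ hχ1]
    · by_cases h₁ : a * b * (a + 2 * b) = 0 <;> simp [h₀, h₁]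
  have hp2 : 2 ≤ p := (Fact.out : p.Prime).two_le
  simp only [hleg, hsummand, sum_sub_distrib, ← sum_div]
  simp only [← Nat.cast_sum, ← card_filter, ← Int.cast_pow, ← Int.cast_sum]
  rw [sum_card_filter_mul_mul_add_ne_zero h2, sum_sum_cubicCharSum_sq hχ hχ1 h2, ZMod.card]
  push_cast [Nat.cast_sub (by omega : 1 ≤ p), Nat.cast_sub hp2]
  field_simp
  ring
end

section
/- Let p be an odd prime. Define T(a,b) = Σ_{x mod p} ((x(x²+2ax-b))/p) with (·/p) the Legendre symbol. Then Σ_{a mod p} Σ_{b mod p} T(a,b)² = p(p-1)². -/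
/-!
Write `χ` for the quadratic character of a finite field `F` of odd characteristic and `q = #F`.
Expanding the square gives `∑_{x,y} χ(x) χ(y) ∑_{a,b} χ(x²+2ax-b) χ(y²+2ay-b)`.
For `x ≠ y` the map `(a, b) ↦ (x²+2ax-b, y²+2ay-b)` is a bijection of `F²`,
so the inner sum is `(∑ χ)² = 0`; for `x = y` it is `q (q - 1)`.
What remains is `q (q - 1) ∑ χ(x)² = q (q - 1)²`.
-/

open Finset

section

variable {F : Type*} [Field F]

theorem bijective_affine_pair {c d : F} (hcd : c ≠ d) (s t : F) :
    Function.Bijective fun ab : F × F => (s + ab.1 * c - ab.2, t + ab.1 * d - ab.2) := by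
  have hcd' : c - d ≠ 0 := sub_ne_zero.mpr hcd
  refine ⟨fun ab ab' h => ?_, fun uv => ?_⟩
  · simp only [Prod.mk.injEq] at h
    have ha : ab.1 = ab'.1 := by
      apply mul_left_cancel₀ hcd'
      linear_combination h.1 - h.2
    exact Prod.ext ha (by linear_combination (c * ha) - h.1)
  · obtain ⟨u, v⟩ := uv
    refine ⟨((u - s - (v - t)) / (c - d), s + (u - s - (v - t)) / (c - d) * c - u), ?_⟩
    ext <;> field_simp <;> ring

end

section

variable {F : Type*} [Field F] [Fintype F] [DecidableEq F]

local notation "χ" => quadraticChar F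

theorem sum_quadraticChar_sq :
    ∑ b : F, χ b ^ 2 = Fintype.card F - 1 := by
  have h := MulChar.sum_one_eq_card_units (R := F) (R' := ℤ)
  rw [← (quadraticChar_isQuadratic F).sq_eq_one, Fintype.card_units] at h
  simpa [MulChar.pow_apply' _ two_ne_zero, Nat.cast_sub Fintype.card_pos] using h

theorem sum_sum_quadraticChar_mul_eq_zero (hF : ringChar F ≠ 2) {x y : F} (hxy : x ≠ y) :
    ∑ a : F, ∑ b : F, χ (x ^ 2 + 2 * a * x - b) * χ (y ^ 2 + 2 * a * y - b) = 0 := by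
  have h2xy : 2 * x ≠ 2 * y := (mul_right_injective₀ (Ring.two_ne_zero hF)).ne hxy
  rw [← Fintype.sum_prod_type',
    Fintype.sum_bijective _ (bijective_affine_pair h2xy (x ^ 2) (y ^ 2)) _
      (fun uv => χ uv.1 * χ uv.2) fun _ => by ring_nf,
    Fintype.sum_prod_type,
    ← Fintype.sum_mul_sum, quadraticChar_sum_zero hF, zero_mul]

theorem sum_sum_quadraticChar_sq (x : F) :
    ∑ a : F, ∑ b : F, χ (x ^ 2 + 2 * a * x - b) ^ 2
      = Fintype.card F * (Fintype.card F - 1) := by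
  have hshift (c : F) : ∑ b : F, χ (c - b) ^ 2 = Fintype.card F - 1 :=
    (Fintype.sum_equiv (Equiv.subLeft c) _ _ fun _ => rfl).trans sum_quadraticChar_sq
  simp only [hshift, sum_const, card_univ, nsmul_eq_mul]

theorem sum_sum_sq_sum_quadraticChar_cubic (hF : ringChar F ≠ 2) :
    ∑ a : F, ∑ b : F, (∑ x : F, χ (x * (x ^ 2 + 2 * a * x - b))) ^ 2
      = Fintype.card F * (Fintype.card F - 1) ^ 2 := by
  have hpair (x y : F) :
      ∑ a : F, ∑ b : F, χ (x ^ 2 + 2 * a * x - b) * χ (y ^ 2 + 2 * a * y - b)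
        = if x = y then (Fintype.card F * (Fintype.card F - 1) : ℤ) else 0 := by
    split_ifs with hxy
    · simpa [hxy, sq] using sum_sum_quadraticChar_sq y
    · exact sum_sum_quadraticChar_mul_eq_zero hF hxy
  calc ∑ a : F, ∑ b : F, (∑ x : F, χ (x * (x ^ 2 + 2 * a * x - b))) ^ 2
      = ∑ a : F, ∑ b : F, ∑ x : F, ∑ y : F, χ x * χ y *
          (χ (x ^ 2 + 2 * a * x - b) * χ (y ^ 2 + 2 * a * y - b)) := by
        simp only [sq, Finset.sum_mul_sum, map_mul]
        congr! 4 with a _ b _ x _ y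
        ring
    _ = ∑ x : F, ∑ y : F, χ x * χ y *
          ∑ a : F, ∑ b : F, χ (x ^ 2 + 2 * a * x - b) * χ (y ^ 2 + 2 * a * y - b) := by
        simp only [Finset.mul_sum]
        rw [← Fintype.sum_prod_type', Finset.sum_comm]
        refine Finset.sum_congr rfl fun x _ => ?_
        rw [Finset.sum_comm]
        exact Finset.sum_congr rfl fun y _ => Fintype.sum_prod_type _
    _ = ∑ x : F, χ x * χ x * (Fintype.card F * (Fintype.card F - 1)) := by
        simp only [hpair, mul_ite, mul_zero, Finset.sum_ite_eq, Finset.mem_univ, if_true]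
    _ = Fintype.card F * (Fintype.card F - 1) ^ 2 := by
        rw [← Finset.sum_mul]
        simp only [← sq, sum_quadraticChar_sq]
        ring

end

/-- Second moment for the family `F₂`: for an odd prime `p`, with
`T(a,b) = Σ_{x mod p} ((x(x²+2ax-b))/p)`, one has
`Σ_{a,b mod p} T(a,b)² = p(p-1)²`. -/
theorem stmt_4 (p : ℕ) [Fact p.Prime] (hp : p ≠ 2) :
    ∑ a : ZMod p, ∑ b : ZMod p,
      (∑ x : ZMod p, (legendreSym p ((x * (x^2 + 2*a*x - b)).val) : ℤ)) ^ 2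
      = (p : ℤ) * (p - 1)^2 := by
  have hval (z : ZMod p) : legendreSym p z.val = quadraticChar (ZMod p) z := by
    simp [legendreSym]
  simp only [hval]
  rw [sum_sum_sq_sum_quadraticChar_cubic (by rwa [ZMod.ringChar_zmod_n]), ZMod.card]
end
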